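/- Two distinct elements of a set that differ by a positive scalar multiple become indistinguishable after layer norm following a shared linear map, but remain distinguishable if the pre-normalization value is added via a residual connection: if x' = αx with α > 0, α ≠ 1, and x ≠ 0, then x + LN(xW) ≠ x' + LN(x'W) even though LN(xW) = LN(x'W). -/
import Mathlib


noncomputable section

/-- Mean of a vector in ℝ^D. -/
def vmean {D : ℕ} (z : Fin D → ℝ) : ℝ := (∑ d, z d) / D

/-- Standard deviation of a vector in ℝ^D. -/
def vstd {D : ℕ} (z : Fin D → ℝ) : ℝ :=
  Real.sqrt ((∑ d, (z d - vmean z) ^ 2) / D)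

/-- Layer norm with parameters γ, β. -/
def layerNorm {D : ℕ} (γ β : Fin D → ℝ) (z : Fin D → ℝ) : Fin D → ℝ :=
  fun d => γ d * ((z d - vmean z) / vstd z) + β d

/-- Two distinct elements differing by a positive scalar multiple
become indistinguishable after layer norm following a shared linear map, but
remain distinguishable with a residual connection: if `x' = α • x` with
`α > 0`, `α ≠ 1`, `x ≠ 0`, then `LN(xW) = LN(x'W)` yet
`x + LN(xW) ≠ x' + LN(x'W)`. -/
theorem stmt_15 {D : ℕ} (W : Matrix (Fin D) (Fin D) ℝ) (γ β : Fin D → ℝ)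
    (x : Fin D → ℝ) (hx : x ≠ 0)
    (hW : ∃ i j, Matrix.vecMul x W i ≠ Matrix.vecMul x W j)
    (α : ℝ) (hα : 0 < α) (hα1 : α ≠ 1) :
    layerNorm γ β (Matrix.vecMul x W) = layerNorm γ β (Matrix.vecMul (α • x) W) ∧
    x + layerNorm γ β (Matrix.vecMul x W) ≠
      α • x + layerNorm γ β (Matrix.vecMul (α • x) W) := by
  have hvm : Matrix.vecMul (α • x) W = α • Matrix.vecMul x W := by
    ext j
    simp [Matrix.vecMul, dotProduct, Finset.mul_sum, mul_assoc]
  set z := Matrix.vecMul x W with hz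
  have hmean : vmean (α • z) = α * vmean z := by
    simp only [vmean, Pi.smul_apply, smul_eq_mul, ← Finset.mul_sum, mul_div_assoc]
  have hstd : vstd (α • z) = α * vstd z := by
    unfold vstd
    rw [hmean]
    have : (∑ d, ((α • z) d - α * vmean z) ^ 2) = α ^ 2 * ∑ d, (z d - vmean z) ^ 2 := by
      rw [Finset.mul_sum]
      refine Finset.sum_congr rfl fun d _ => ?_
      simp [Pi.smul_apply, smul_eq_mul]
      ring
    rw [this, mul_div_assoc, Real.sqrt_mul (sq_nonneg α), Real.sqrt_sq hα.le]
  have hLN : layerNorm γ β z = layerNorm γ β (α • z) := by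
    funext d
    unfold layerNorm
    rw [hmean, hstd]
    have : (α • z) d - α * vmean z = α * (z d - vmean z) := by
      simp [smul_eq_mul]; ring
    rw [this, mul_div_mul_left _ _ (ne_of_gt hα)]
  refine ⟨by rw [hvm]; exact hLN, ?_⟩
  intro h
  rw [hvm, ← hLN] at h
  have hx' : x = α • x := by
    have := add_right_cancel h
    exact this
  apply hx
  funext d
  have hd : x d = α * x d := congrFun hx' d
  have : (1 - α) * x d = 0 := by linarith
  rcases mul_eq_zero.mp this with h1 | h2
  · exact absurd (by linarith : α = 1) hα1
  · simpa using h2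

end
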